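/- Let ς be a random vector in ℝⁿ with finite fourth moment, mean μ and covariance Σ, satisfying the fourth-moment identity E[‖ς‖⁴] = ‖Σ‖_F² + 2(Tr Σ)² + 4 μᵀΣμ + ‖μ‖⁴, and suppose μμᵀ ⪯ Γ_μ and Σ ⪯ Γ_Σ for symmetric positive semidefinite matrices Γ_μ, Γ_Σ. Let Z¹, …, Z^N be independent random vectors each with the same law as ς, and let ε > 0. Then with probability at least 1 − (2/(N ε²)) · ( (Tr Γ_Σ)² + λmax(Γ_Σ) · Tr Γ_μ ), the empirical second-moment matrix satisfies (1/N) Σ_{i=1}^N Zⁱ(Zⁱ)ᵀ ⪯ Γ_Σ + Γ_μ + ε Iₙ. -/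

import Mathlib

/-!
Let `M = E[ςςᵀ] = Σ + μμᵀ` and `D = (1/N) Σᵢ Zⁱ(Zⁱ)ᵀ − M`. Entrywise, `D` is the centred average of
`N` pairwise independent copies of `ς_a ς_b`, so `E‖D‖_F² = (E‖ς‖⁴ − ‖M‖_F²)/N`, which the
fourth-moment identity turns into `2((Tr Σ)² + μᵀΣμ)/N ≤ 2((Tr Γ_Σ)² + λmax(Γ_Σ) Tr Γ_μ)/N`.
By Markov's inequality `‖D‖_F < ε` with the stated probability, and then
`D ⪯ ‖D‖_F Iₙ ⪯ ε Iₙ` by Cauchy–Schwarz for `xᵀDx = ⟨D, xxᵀ⟩_F`, so the empirical matrix is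
`⪯ Σ + μμᵀ + ε Iₙ ⪯ Γ_Σ + Γ_μ + ε Iₙ`.
-/

open MeasureTheory ProbabilityTheory Matrix

/-- Euclidean norm of a vector in `ℝⁿ`. -/
noncomputable def euclNorm {n : ℕ} (x : Fin n → ℝ) : ℝ := Real.sqrt (∑ i, (x i) ^ 2)

/-- Frobenius norm of a real matrix. -/
noncomputable def frobNorm {n m : ℕ} (A : Matrix (Fin n) (Fin m) ℝ) : ℝ :=
  Real.sqrt (∑ i, ∑ j, (A i j) ^ 2)

/-- Largest eigenvalue of a real symmetric matrix. -/
noncomputable def lamMax {n : ℕ} {A : Matrix (Fin n) (Fin n) ℝ} (hA : A.IsHermitian) : ℝ :=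
  ⨆ i, hA.eigenvalues i

section LinearAlgebra

variable {n : ℕ}

lemma dotProduct_self_nonneg (x : Fin n → ℝ) : 0 ≤ x ⬝ᵥ x :=
  dotProduct_self_star_nonneg x

lemma frobNorm_sq {m : ℕ} (A : Matrix (Fin n) (Fin m) ℝ) : frobNorm A ^ 2 = ∑ i, ∑ j, A i j ^ 2 :=
  Real.sq_sqrt (by positivity)

lemma frobNorm_vecMulVec_self (x : Fin n → ℝ) : frobNorm (vecMulVec x x) = x ⬝ᵥ x := by
  have hsq : ∑ i, ∑ j, vecMulVec x x i j ^ 2 = (x ⬝ᵥ x) ^ 2 := by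
    simp only [vecMulVec_apply, dotProduct, sq, Finset.sum_mul_sum]
    exact Finset.sum_congr rfl fun i _ => Finset.sum_congr rfl fun j _ => by ring
  rw [frobNorm, hsq, Real.sqrt_sq (dotProduct_self_nonneg x)]

lemma euclNorm_pow_four (x : Fin n → ℝ) : euclNorm x ^ 4 = frobNorm (vecMulVec x x) ^ 2 := by
  rw [frobNorm_vecMulVec_self, euclNorm, show 4 = 2 * 2 from rfl, pow_mul,
    Real.sq_sqrt (by positivity)]
  simp only [dotProduct, sq]

lemma frobNorm_add_vecMulVec_self_sq (S : Matrix (Fin n) (Fin n) ℝ) (x : Fin n → ℝ) :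
    frobNorm (S + vecMulVec x x) ^ 2 = frobNorm S ^ 2 + 2 * (x ⬝ᵥ S *ᵥ x) + euclNorm x ^ 4 := by
  simp only [euclNorm_pow_four, frobNorm_sq, Matrix.add_apply, vecMulVec_apply, dotProduct, mulVec,
    Finset.mul_sum, ← Finset.sum_add_distrib]
  exact Finset.sum_congr rfl fun i _ => Finset.sum_congr rfl fun j _ => by ring

lemma sum_mul_le_frobNorm_mul_frobNorm {m : ℕ} (A B : Matrix (Fin n) (Fin m) ℝ) :
    ∑ i, ∑ j, A i j * B i j ≤ frobNorm A * frobNorm B := by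
  have := Real.sum_mul_le_sqrt_mul_sqrt Finset.univ (fun p : Fin n × Fin m => A p.1 p.2)
    (fun p => B p.1 p.2)
  simpa only [frobNorm, Fintype.sum_prod_type] using this

lemma dotProduct_mulVec_le_frobNorm_mul (A : Matrix (Fin n) (Fin n) ℝ) (x : Fin n → ℝ) :
    x ⬝ᵥ A *ᵥ x ≤ frobNorm A * (x ⬝ᵥ x) := by
  rw [← frobNorm_vecMulVec_self]
  convert sum_mul_le_frobNorm_mul_frobNorm A (vecMulVec x x) using 1
  simp only [dotProduct, mulVec, vecMulVec_apply, Finset.mul_sum]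
  exact Finset.sum_congr rfl fun i _ => Finset.sum_congr rfl fun j _ => by ring

lemma posSemidef_smul_one_sub_of_frobNorm_le {A : Matrix (Fin n) (Fin n) ℝ} (hA : A.IsHermitian)
    {ε : ℝ} (h : frobNorm A ≤ ε) : (ε • 1 - A).PosSemidef := by
  refine .of_dotProduct_mulVec_nonneg ((isHermitian_one.smul (.all ε)).sub hA) fun x => ?_
  rw [star_trivial, sub_mulVec, dotProduct_sub, smul_mulVec, one_mulVec, dotProduct_smul,
    smul_eq_mul, sub_nonneg]
  exact (dotProduct_mulVec_le_frobNorm_mul A x).trans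
    (mul_le_mul_of_nonneg_right h (dotProduct_self_nonneg x))

open scoped MatrixOrder in
lemma posSemidef_lamMax_smul_one_sub {A : Matrix (Fin n) (Fin n) ℝ} (hA : A.IsHermitian) :
    (lamMax hA • 1 - A).PosSemidef := by
  rw [← Matrix.le_iff, ← Algebra.algebraMap_eq_smul_one, le_algebraMap_iff_spectrum_le hA,
    hA.spectrum_real_eq_range_eigenvalues]
  rintro _ ⟨i, rfl⟩
  exact le_ciSup (Set.finite_range _).bddAbove i

lemma lamMax_nonneg {A : Matrix (Fin n) (Fin n) ℝ} (hA : A.PosSemidef) :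
    0 ≤ lamMax hA.isHermitian := by
  cases n with
  | zero => simp [lamMax]
  | succ n => exact (hA.eigenvalues_nonneg 0).trans (le_ciSup (Set.finite_range _).bddAbove 0)

lemma trace_le_trace_of_posSemidef_sub {A B : Matrix (Fin n) (Fin n) ℝ} (h : (B - A).PosSemidef) :
    A.trace ≤ B.trace :=
  sub_nonneg.mp (trace_sub B A ▸ h.trace_nonneg)

end LinearAlgebra

section Probability

variable {Ω : Type*} [MeasurableSpace Ω] {P : Measure Ω}

lemma memLp_two_of_integrable_mul_self {X : Ω → ℝ} (hX : AEStronglyMeasurable X P)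
    (h : Integrable (fun ω => X ω * X ω) P) : MemLp X 2 P :=
  (memLp_two_iff_integrable_sq hX).mpr (by simpa only [sq] using h)

variable [IsProbabilityMeasure P]

lemma one_sub_integral_div_le_measureReal_lt {f : Ω → ℝ} (hf₀ : 0 ≤ᵐ[P] f) (hf : Integrable f P)
    {ε : ℝ} (hε : 0 < ε) : 1 - (∫ ω, f ω ∂P) / ε ≤ P.real {ω | f ω < ε} := by
  have hmarkov : P.real {ω | ε ≤ f ω} ≤ (∫ ω, f ω ∂P) / ε := by
    rw [le_div_iff₀ hε, mul_comm]
    exact mul_meas_ge_le_integral_of_nonneg hf₀ hf ε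
  have hcover : {ω | ε ≤ f ω} ∪ {ω | f ω < ε} = Set.univ := by
    ext ω
    simpa using le_or_gt ε (f ω)
  have := measureReal_union_le (μ := P) {ω | ε ≤ f ω} {ω | f ω < ε}
  rw [hcover, probReal_univ] at this
  linarith

lemma integral_average_sub_sq {ι : Type*} [Fintype ι] [Nonempty ι] {W : ι → Ω → ℝ} {X : Ω → ℝ}
    (hX : MemLp X 2 P) (hW : ∀ k, IdentDistrib (W k) X P P)
    (hindep : Pairwise fun k l => IndepFun (W k) (W l) P) :
    ∫ ω, ((Fintype.card ι : ℝ)⁻¹ * ∑ k, W k ω - P[X]) ^ 2 ∂P = Var[X; P] / Fintype.card ι := by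
  have hc : (Fintype.card ι : ℝ) ≠ 0 := Nat.cast_ne_zero.mpr Fintype.card_ne_zero
  have hWmem : ∀ k, MemLp (W k) 2 P := fun k => (hW k).memLp_iff.mpr hX
  have hsum : (fun ω => ∑ k, W k ω) = ∑ k, W k := by
    ext ω
    rw [Finset.sum_apply]
  have hmean : P[fun ω => (Fintype.card ι : ℝ)⁻¹ * ∑ k, W k ω] = P[X] := by
    rw [integral_const_mul, integral_finsetSum _ fun k _ => (hWmem k).integrable one_le_two]
    simp only [fun k => (hW k).integral_eq, Finset.sum_const, Finset.card_univ, nsmul_eq_mul]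
    field_simp
  have hmeas : AEMeasurable (fun ω => (Fintype.card ι : ℝ)⁻¹ * ∑ k, W k ω) P :=
    ((memLp_finsetSum _ fun k _ => hWmem k).const_mul _).aestronglyMeasurable.aemeasurable
  rw [← hmean, ← variance_eq_integral hmeas, variance_const_mul, hsum,
    IndepFun.variance_sum (fun k _ => hWmem k) fun k _ l _ hkl => hindep hkl]
  simp only [fun k => (hW k).variance_eq, Finset.sum_const, Finset.card_univ, nsmul_eq_mul]
  field_simp

end Probability

section SecondMoment

variable {Ω : Type*} [MeasurableSpace Ω] {n : ℕ}

noncomputable def secondMoment (ς : Ω → Fin n → ℝ) (P : Measure Ω) : Matrix (Fin n) (Fin n) ℝ :=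
  Matrix.of fun i j => ∫ ω, ς ω i * ς ω j ∂P

noncomputable def empiricalSecondMoment {ι : Type*} [Fintype ι] (z : ι → Fin n → ℝ) :
    Matrix (Fin n) (Fin n) ℝ :=
  (Fintype.card ι : ℝ)⁻¹ • ∑ k, vecMulVec (z k) (z k)

lemma empiricalSecondMoment_apply {ι : Type*} [Fintype ι] (z : ι → Fin n → ℝ) (i j : Fin n) :
    empiricalSecondMoment z i j = (Fintype.card ι : ℝ)⁻¹ * ∑ k, z k i * z k j := by
  simp [empiricalSecondMoment, Matrix.sum_apply, vecMulVec_apply]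

lemma isHermitian_secondMoment (ς : Ω → Fin n → ℝ) (P : Measure Ω) :
    (secondMoment ς P).IsHermitian :=
  IsHermitian.ext fun i j => by simp [secondMoment, mul_comm]

lemma isHermitian_empiricalSecondMoment {ι : Type*} [Fintype ι] (z : ι → Fin n → ℝ) :
    (empiricalSecondMoment z).IsHermitian :=
  IsHermitian.ext fun i j => by simp [empiricalSecondMoment_apply, mul_comm]

variable {P : Measure Ω} [IsProbabilityMeasure P]

lemma secondMoment_eq_add_vecMulVec {ς : Ω → Fin n → ℝ} (hς : ∀ i, MemLp (fun ω => ς ω i) 2 P)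
    {μ : Fin n → ℝ} (hμ : ∀ i, μ i = ∫ ω, ς ω i ∂P) {S : Matrix (Fin n) (Fin n) ℝ}
    (hS : ∀ i j, S i j = ∫ ω, (ς ω i - μ i) * (ς ω j - μ j) ∂P) :
    secondMoment ς P = S + vecMulVec μ μ := by
  ext i j
  have hcov : S i j = cov[fun ω => ς ω i, fun ω => ς ω j; P] := by
    simp only [hS, covariance, hμ]
  rw [Matrix.add_apply, hcov, covariance_eq_sub (hς i) (hς j), vecMulVec_apply, hμ, hμ]
  simp [secondMoment]

lemma integral_frobNorm_empiricalSecondMoment_sub_sq {ι : Type*} [Fintype ι] [Nonempty ι]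
    {ς : Ω → Fin n → ℝ} {Z : ι → Ω → Fin n → ℝ}
    (hς : ∀ i j, MemLp (fun ω => ς ω i * ς ω j) 2 P) (hZ : ∀ k, IdentDistrib (Z k) ς P P)
    (hindep : Pairwise fun k l => IndepFun (Z k) (Z l) P) :
    Integrable (fun ω => frobNorm (empiricalSecondMoment (Z · ω) - secondMoment ς P) ^ 2) P ∧
    ∫ ω, frobNorm (empiricalSecondMoment (Z · ω) - secondMoment ς P) ^ 2 ∂P =
      (∫ ω, euclNorm (ς ω) ^ 4 ∂P - frobNorm (secondMoment ς P) ^ 2) / Fintype.card ι := by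
  have hprod : ∀ i j : Fin n, Measurable fun v : Fin n → ℝ => v i * v j :=
    fun i j => (measurable_pi_apply i).mul (measurable_pi_apply j)
  have hident : ∀ i j k, IdentDistrib (fun ω => Z k ω i * Z k ω j) (fun ω => ς ω i * ς ω j) P P :=
    fun i j k => (hZ k).comp (hprod i j)
  have hentry_int : ∀ i j, Integrable (fun ω => ((Fintype.card ι : ℝ)⁻¹ *
      ∑ k, Z k ω i * Z k ω j - P[fun ω => ς ω i * ς ω j]) ^ 2) P := fun i j =>
    (((memLp_finsetSum _ fun k _ => (hident i j k).memLp_iff.mpr (hς i j)).const_mul _).sub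
      (memLp_const _)).integrable_sq
  have hpt : (fun ω => frobNorm (empiricalSecondMoment (Z · ω) - secondMoment ς P) ^ 2) =
      fun ω => ∑ i, ∑ j, ((Fintype.card ι : ℝ)⁻¹ *
        ∑ k, Z k ω i * Z k ω j - P[fun ω => ς ω i * ς ω j]) ^ 2 := by
    ext ω
    simp [frobNorm_sq, empiricalSecondMoment_apply, secondMoment]
  have hfourth : ∫ ω, euclNorm (ς ω) ^ 4 ∂P = ∑ i, ∑ j, P[(fun ω => ς ω i * ς ω j) ^ 2] := by
    simp only [euclNorm_pow_four, frobNorm_sq, vecMulVec_apply]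
    rw [integral_finsetSum _ fun i _ => integrable_finsetSum _ fun j _ => (hς i j).integrable_sq]
    simp only [Pi.pow_apply]
    exact Finset.sum_congr rfl fun i _ =>
      integral_finsetSum _ fun j _ => (hς i j).integrable_sq
  refine ⟨hpt ▸ integrable_finsetSum _ fun i _ => integrable_finsetSum _ fun j _ =>
    hentry_int i j, ?_⟩
  rw [hpt, integral_finsetSum _ fun i _ => integrable_finsetSum _ fun j _ => hentry_int i j]
  simp only [integral_finsetSum _ fun j _ => hentry_int _ j,
    fun i j => integral_average_sub_sq (hς i j) (hident i j) fun k l hkl =>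
      (hindep hkl).comp (hprod i j) (hprod i j),
    fun i j => variance_eq_sub (hς i j), hfourth, frobNorm_sq, secondMoment, of_apply]
  simp only [← Finset.sum_div, Finset.sum_sub_distrib]

end SecondMoment

section LoewnerBounds

variable {n : ℕ}

lemma dotProduct_mulVec_le_of_posSemidef_sub {A B : Matrix (Fin n) (Fin n) ℝ}
    (h : (B - A).PosSemidef) (x : Fin n → ℝ) : x ⬝ᵥ A *ᵥ x ≤ x ⬝ᵥ B *ᵥ x := by
  have := h.dotProduct_mulVec_nonneg x
  rwa [star_trivial, sub_mulVec, dotProduct_sub, sub_nonneg] at this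

lemma dotProduct_mulVec_le_lamMax_mul_trace {A G : Matrix (Fin n) (Fin n) ℝ} (hA : A.PosSemidef)
    {x : Fin n → ℝ} (hx : (G - vecMulVec x x).PosSemidef) :
    x ⬝ᵥ A *ᵥ x ≤ lamMax hA.isHermitian * G.trace := by
  have hrayleigh := dotProduct_mulVec_le_of_posSemidef_sub
    (posSemidef_lamMax_smul_one_sub hA.isHermitian) x
  rw [smul_mulVec, one_mulVec, dotProduct_smul, smul_eq_mul] at hrayleigh
  have htrace := trace_le_trace_of_posSemidef_sub hx
  rw [trace_vecMulVec] at htrace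
  exact hrayleigh.trans (mul_le_mul_of_nonneg_left htrace (lamMax_nonneg hA))

lemma trace_sq_add_dotProduct_mulVec_le {S G H : Matrix (Fin n) (Fin n) ℝ} {x : Fin n → ℝ}
    (hG : G.PosSemidef) (hS : 0 ≤ S.trace) (hSG : (G - S).PosSemidef)
    (hxH : (H - vecMulVec x x).PosSemidef) :
    S.trace ^ 2 + x ⬝ᵥ S *ᵥ x ≤ G.trace ^ 2 + lamMax hG.isHermitian * H.trace :=
  add_le_add (pow_le_pow_left₀ hS (trace_le_trace_of_posSemidef_sub hSG) 2)
    ((dotProduct_mulVec_le_of_posSemidef_sub hSG x).trans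
      (dotProduct_mulVec_le_lamMax_mul_trace hG hxH))

lemma posSemidef_add_smul_one_sub_of_frobNorm_le {G M A : Matrix (Fin n) (Fin n) ℝ}
    (hGM : (G - M).PosSemidef) (hAM : (A - M).IsHermitian) {ε : ℝ} (h : frobNorm (A - M) ≤ ε) :
    (G + ε • 1 - A).PosSemidef := by
  convert hGM.add (posSemidef_smul_one_sub_of_frobNorm_le hAM h) using 1
  abel

end LoewnerBounds

theorem empirical_second_moment_loewner_bound_general
    {n N : ℕ} (hN : 0 < N)
    {Ω : Type*} [MeasurableSpace Ω] {P : Measure Ω} [IsProbabilityMeasure P]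
    -- the random vector ς, with finite fourth moment
    (ς : Ω → Fin n → ℝ) (hςmeas : Measurable ς)
    (hint2 : ∀ i j, Integrable (fun ω => ς ω i * ς ω j) P)
    (hint4 : ∀ i j k l, Integrable (fun ω => ς ω i * ς ω j * (ς ω k * ς ω l)) P)
    -- mean and covariance
    (μ : Fin n → ℝ) (hμ : ∀ i, μ i = ∫ ω, ς ω i ∂P)
    (Sm : Matrix (Fin n) (Fin n) ℝ)
    (hSm : ∀ i j, Sm i j = ∫ ω, (ς ω i - μ i) * (ς ω j - μ j) ∂P)
    -- the fourth-moment identity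
    (h4 : ∫ ω, euclNorm (ς ω) ^ 4 ∂P =
      frobNorm Sm ^ 2 + 2 * Sm.trace ^ 2 + 4 * (μ ⬝ᵥ Sm.mulVec μ) + euclNorm μ ^ 4)
    -- the bounding matrices
    (Gm GS : Matrix (Fin n) (Fin n) ℝ)
    (hGS : GS.PosSemidef)
    (hμbd : (Gm - vecMulVec μ μ).PosSemidef)
    (hSmbd : (GS - Sm).PosSemidef)
    -- the independent samples, each with the same law as ς
    (Z : Fin N → Ω → Fin n → ℝ) (hZmeas : ∀ i, Measurable (Z i))
    (hZindep : iIndepFun Z P)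
    (hZlaw : ∀ i, Measure.map (Z i) P = Measure.map ς P)
    (ε : ℝ) (hε : 0 < ε) :
    1 - 2 / (N * ε ^ 2) * (GS.trace ^ 2 + lamMax hGS.isHermitian * Gm.trace) ≤
      (P {ω | (GS + Gm + ε • (1 : Matrix (Fin n) (Fin n) ℝ)
        - (N : ℝ)⁻¹ • ∑ i, vecMulVec (Z i ω) (Z i ω)).PosSemidef}).toReal := by
  have : Nonempty (Fin N) := ⟨⟨0, hN⟩⟩
  have hςaesm : ∀ i, AEStronglyMeasurable (fun ω => ς ω i) P :=
    fun i => (measurable_pi_apply i).comp hςmeas |>.aestronglyMeasurable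
  have hM := secondMoment_eq_add_vecMulVec
    (fun i => memLp_two_of_integrable_mul_self (hςaesm i) (hint2 i i)) hμ hSm
  obtain ⟨hint, hE⟩ := integral_frobNorm_empiricalSecondMoment_sub_sq
    (fun i j => memLp_two_of_integrable_mul_self ((hςaesm i).mul (hςaesm j)) (hint4 i j i j))
    (fun k => ⟨(hZmeas k).aemeasurable, hςmeas.aemeasurable, hZlaw k⟩)
    fun k l hkl => hZindep.indepFun hkl
  set F := fun ω => frobNorm (empiricalSecondMoment (Z · ω) - secondMoment ς P) ^ 2
  set B := GS.trace ^ 2 + lamMax hGS.isHermitian * Gm.trace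
  have hSm0 : 0 ≤ Sm.trace :=
    Finset.sum_nonneg fun i _ => (hSm i i ▸ integral_nonneg fun ω => mul_self_nonneg _ :)
  have hEB : ∫ ω, F ω ∂P ≤ 2 * B / N := by
    rw [hE, Fintype.card_fin, h4, hM, frobNorm_add_vecMulVec_self_sq]
    gcongr
    linarith [trace_sq_add_dotProduct_mulVec_le hGS hSm0 hSmbd hμbd]
  have hGM : (GS + Gm - secondMoment ς P).PosSemidef := by
    rw [hM]
    convert hSmbd.add hμbd using 1
    abel
  have hgood : {ω | F ω < ε ^ 2} ⊆ {ω | (GS + Gm + ε • (1 : Matrix (Fin n) (Fin n) ℝ)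
      - (N : ℝ)⁻¹ • ∑ i, vecMulVec (Z i ω) (Z i ω)).PosSemidef} := fun ω hω => by
    simpa [empiricalSecondMoment] using posSemidef_add_smul_one_sub_of_frobNorm_le hGM
      ((isHermitian_empiricalSecondMoment _).sub (isHermitian_secondMoment ς P))
      (lt_of_pow_lt_pow_left₀ 2 hε.le hω).le
  calc 1 - 2 / (N * ε ^ 2) * B = 1 - 2 * B / N / ε ^ 2 := by ring
    _ ≤ 1 - (∫ ω, F ω ∂P) / ε ^ 2 := by gcongr
    _ ≤ P.real {ω | F ω < ε ^ 2} := one_sub_integral_div_le_measureReal_lt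
        (ae_of_all _ fun ω => sq_nonneg _) hint (by positivity)
    _ ≤ _ := measureReal_mono hgood

/-- **(Statement 6)** With probability at least
`1 − (2/(N ε²))((Tr Γ_Σ)² + λmax(Γ_Σ) Tr Γ_μ)`, the empirical second-moment matrix satisfies
`(1/N) Σᵢ Zⁱ(Zⁱ)ᵀ ⪯ Γ_Σ + Γ_μ + ε Iₙ`. -/
theorem empirical_second_moment_loewner_bound
    {n N : ℕ} (hN : 0 < N)
    {Ω : Type*} [MeasurableSpace Ω] {P : Measure Ω} [IsProbabilityMeasure P]
    -- the random vector ς, with finite fourth moment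
    (ς : Ω → Fin n → ℝ) (hςmeas : Measurable ς)
    (hint1 : ∀ i, Integrable (fun ω => ς ω i) P)
    (hint2 : ∀ i j, Integrable (fun ω => ς ω i * ς ω j) P)
    (hint4 : ∀ i j k l, Integrable (fun ω => ς ω i * ς ω j * (ς ω k * ς ω l)) P)
    (hintnorm4 : Integrable (fun ω => euclNorm (ς ω) ^ 4) P)
    -- mean and covariance
    (μ : Fin n → ℝ) (hμ : ∀ i, μ i = ∫ ω, ς ω i ∂P)
    (Sm : Matrix (Fin n) (Fin n) ℝ)
    (hSm : ∀ i j, Sm i j = ∫ ω, (ς ω i - μ i) * (ς ω j - μ j) ∂P)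
    -- the fourth-moment identity
    (h4 : ∫ ω, euclNorm (ς ω) ^ 4 ∂P =
      frobNorm Sm ^ 2 + 2 * Sm.trace ^ 2 + 4 * (μ ⬝ᵥ Sm.mulVec μ) + euclNorm μ ^ 4)
    -- the bounding matrices
    (Gm GS : Matrix (Fin n) (Fin n) ℝ)
    (hGm : Gm.PosSemidef) (hGS : GS.PosSemidef)
    (hμbd : (Gm - vecMulVec μ μ).PosSemidef)
    (hSmbd : (GS - Sm).PosSemidef)
    -- the independent samples, each with the same law as ς
    (Z : Fin N → Ω → Fin n → ℝ) (hZmeas : ∀ i, Measurable (Z i))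
    (hZindep : iIndepFun Z P)
    (hZlaw : ∀ i, Measure.map (Z i) P = Measure.map ς P)
    (ε : ℝ) (hε : 0 < ε) :
    1 - 2 / (N * ε ^ 2) * (GS.trace ^ 2 + lamMax hGS.isHermitian * Gm.trace) ≤
      (P {ω | (GS + Gm + ε • (1 : Matrix (Fin n) (Fin n) ℝ)
        - (N : ℝ)⁻¹ • ∑ i, vecMulVec (Z i ω) (Z i ω)).PosSemidef}).toReal :=
  empirical_second_moment_loewner_bound_general hN ς hςmeas hint2 hint4 μ hμ Sm hSm h4 Gm GS hGS
    hμbd hSmbd Z hZmeas hZindep hZlaw ε hε
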